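/- Let α be a partial action of a groupoid G on a set X. The projection Γ: (G,X) → G is a covering (star injective and star surjective) if and only if α is a global action, i.e., whenever d(g)·x is defined then g·x is defined. -/
import Mathlib


universe u v

/-- A groupoid in the axiomatic sense: a set with a partial multiplication
(`D g h` means the product `gh` is defined, `mul` is a total function whose
value is only meaningful when the product is defined) and a total inversion. -/
class Gpd (G : Type u) where
  mul : G → G → G
  inv : G → G
  D : G → G → Prop
  inv_left : ∀ g, D (inv g) g
  inv_right : ∀ g, D g (inv g)
  D_iff : ∀ g h, D g h ↔ mul (inv g) g = mul h (inv h)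
  assoc : ∀ g h k, D g h → D h k →
    D (mul g h) k ∧ D g (mul h k) ∧ mul (mul g h) k = mul g (mul h k)
  inv_cancel_left : ∀ g h, D g h → mul (inv g) (mul g h) = h
  inv_cancel_right : ∀ g h, D g h → mul (mul g h) (inv h) = g

namespace Gpd

variable {G : Type u} [Gpd G]

/-- The domain `d(g) = g⁻¹g`. -/
def d (g : G) : G := mul (inv g) g

/-- The range `r(g) = gg⁻¹`. -/
def r (g : G) : G := mul g (inv g)

/-- Identities (= idempotents) of the groupoid. -/
def IsId (e : G) : Prop := D e e ∧ mul e e = e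

/-- The set `G₀` of identities of `G`. -/
def objs (G : Type u) [Gpd G] : Set G := {e | IsId e}

/-- Subgroupoid: a nonempty subset closed under inverses and defined products. -/
def IsSubgroupoid (H : Set G) : Prop :=
  H.Nonempty ∧ (∀ h ∈ H, inv h ∈ H) ∧
    ∀ g h : G, g ∈ H → h ∈ H → D g h → mul g h ∈ H

/-- Wide subgroupoid: a subgroupoid containing all identities of `G`. -/
def IsWide (H : Set G) : Prop := IsSubgroupoid H ∧ objs G ⊆ H

/-- Normal subgroupoid: wide and closed under defined conjugations `g⁻¹hg`. -/
def IsNormal (H : Set G) : Prop :=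
  IsWide H ∧ ∀ g h : G, h ∈ H → D (inv g) h → D (mul (inv g) h) g →
    mul (mul (inv g) h) g ∈ H

end Gpd

open Gpd

/-- A partial action of a groupoid `G` on a set `X` (axioms (PGrA1)-(PGrA3)). -/
structure PAction (G : Type u) (X : Type v) [Gpd G] where
  defined : G → X → Prop
  act : G → X → X
  ex_id : ∀ x : X, ∃ e ∈ objs G, defined e x
  id_act : ∀ (e : G) (x : X), e ∈ objs G → defined e x → act e x = x
  inv_act : ∀ (g : G) (x : X), defined g x →
    defined (Gpd.inv g) (act g x) ∧ act (Gpd.inv g) (act g x) = x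
  comp_act : ∀ (g h : G) (x : X), Gpd.D g h → defined h x → defined g (act h x) →
    defined (Gpd.mul g h) x ∧ act (Gpd.mul g h) x = act g (act h x)

lemma isId_d {G : Type u} [Gpd G] (g : G) : IsId (Gpd.d g) := by
  have h1 := Gpd.inv_left g
  have h2 := Gpd.inv_right g
  obtain ⟨hD1, -, -⟩ := Gpd.assoc (Gpd.inv g) g (Gpd.inv g) h1 h2
  have hc : Gpd.mul (Gpd.d g) (Gpd.inv g) = Gpd.inv g :=
    Gpd.inv_cancel_right (Gpd.inv g) g h1
  obtain ⟨-, hD4, heq⟩ := Gpd.assoc (Gpd.d g) (Gpd.inv g) g hD1 h1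
  exact ⟨hD4, by simp only [Gpd.d] at hc heq ⊢; rw [← heq, hc]⟩

/-- the projection `(G,X) → G` is a covering iff the action is global. -/
theorem covering_iff_global {G : Type u} {X : Type v} [Gpd G] (P : PAction G X) :
    ((∀ p q : {p : G × X // P.defined p.1 p.2},
        p.1.1 = q.1.1 → (d p.1.1, p.1.2) = (d q.1.1, q.1.2) → p = q) ∧
     (∀ (e : G) (x : X), e ∈ objs G → P.defined e x → ∀ g : G, d g = e →
        ∃ p : {p : G × X // P.defined p.1 p.2},
          (d p.1.1, p.1.2) = (e, x) ∧ p.1.1 = g)) ↔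
      ∀ (g : G) (x : X), P.defined (d g) x → P.defined g x := by
  constructor
  · rintro ⟨-, hsurj⟩ g x hdx
    obtain ⟨p, hp1, hp2⟩ := hsurj (d g) x (isId_d g) hdx g rfl
    have hx : p.1.2 = x := congrArg Prod.snd hp1
    have := p.2
    rwa [hp2, hx] at this
  · intro hg
    refine ⟨?_, ?_⟩
    · intro p q h1 h2
      exact Subtype.ext (Prod.ext h1 (congrArg Prod.snd h2 : _))
    · intro e x he hx g hdg
      exact ⟨⟨(g, x), hg g x (by rwa [hdg])⟩, by simp [hdg], rfl⟩
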